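/- Let $K$ be a field of characteristic $0$ and let $\Phi \in K[X]$ be a monic polynomial of degree $n$ all of whose roots (in an algebraic closure of $K$) are roots of unity. Then the support of $\Phi$ is symmetric: for every $0 \le s \le n$, the coefficient of $X^s$ in $\Phi$ is nonzero if and only if the coefficient of $X^{n-s}$ is nonzero. -/

import Mathlib

/-!
All roots of `Φ` are powers of a single primitive root of unity `ζ`, so over the algebraic
closure `Φ` is a product of linear factors `X - r` with `r ∈ ℚ(ζ)`. The embedding of `ℚ(ζ)`
sending `ζ` to `ζ⁻¹` maps this factorisation to `∏ (X - r⁻¹)`, which is a nonzero constant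
times the reverse of `Φ`. Field embeddings are injective, so `Φ` and its reverse vanish at
the same coefficients.
-/

open Polynomial IntermediateField

theorem Multiset.exists_pow_eq_one_of_forall {G : Type*} [Monoid G] (s : Multiset G)
    (h : ∀ x ∈ s, ∃ m, 0 < m ∧ x ^ m = 1) : ∃ M, 0 < M ∧ ∀ x ∈ s, x ^ M = 1 := by
  induction s using Multiset.induction_on with
  | empty => exact ⟨1, one_pos, by simp⟩
  | cons a s ih =>
    obtain ⟨m, hm, ham⟩ := h a (Multiset.mem_cons_self a s)
    obtain ⟨M, hM, hsM⟩ := ih fun x hx => h x (Multiset.mem_cons_of_mem hx)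
    refine ⟨m * M, Nat.mul_pos hm hM, fun x hx => ?_⟩
    rcases Multiset.mem_cons.mp hx with rfl | hx
    · rw [pow_mul, ham, one_pow]
    · rw [pow_mul', hsM x hx, one_pow]

namespace Polynomial

theorem reverse_multiset_prod {R : Type*} [CommSemiring R] [NoZeroDivisors R]
    (t : Multiset R[X]) : t.prod.reverse = (t.map reverse).prod := by
  induction t using Multiset.induction_on with
  | empty => simpa using reverse_C (1 : R)
  | cons a s ih => simp [reverse_mul_of_domain, ih]

theorem reverse_X_sub_C_of_ne_zero {F : Type*} [Field F] {a : F} (ha : a ≠ 0) :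
    (X - C a).reverse = C (-a) * (X - C a⁻¹) := by
  have hX : (X : F[X]).reverse = 1 := by
    rw [← one_mul X, reverse_mul_X, ← C_1, reverse_C]
  rw [sub_eq_add_neg, ← C_neg, reverse_add_C, hX, natDegree_X, pow_one, mul_sub, ← C_mul,
    neg_mul, mul_inv_cancel₀ ha, C_neg, C_neg, C_1]
  ring

theorem reverse_multiset_prod_X_sub_C {F : Type*} [Field F] {S : Multiset F}
    (hS : ∀ a ∈ S, a ≠ 0) :
    (S.map (X - C ·)).prod.reverse = C (S.map (-·)).prod * (S.map (X - C ·⁻¹)).prod := by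
  rw [reverse_multiset_prod, Multiset.map_map, Function.comp_def,
    Multiset.map_congr rfl fun a ha => reverse_X_sub_C_of_ne_zero (hS a ha),
    Multiset.prod_map_mul, map_multiset_prod, Multiset.map_map]
  rfl

theorem coeff_reverse_prod_X_sub_C_eq_zero_iff {F L : Type*} [Field F] [Field L]
    (ι σ : F →+* L) {S : Multiset F} (hS : ∀ a ∈ S, σ a * ι a = 1) (k : ℕ) :
    (S.map (X - C ·)).prod.reverse.coeff k = 0 ↔ (S.map (X - C ·)).prod.coeff k = 0 := by
  have hS0 : ∀ a ∈ S, a ≠ 0 := fun a ha h0 => by simpa [h0] using hS a ha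
  have hc : σ (S.map (-·)).prod ≠ 0 := by
    rw [Ne, map_eq_zero_iff σ σ.injective, Multiset.prod_eq_zero_iff, Multiset.mem_map]
    rintro ⟨a, ha, h0⟩
    exact hS0 a ha (neg_eq_zero.mp h0)
  have hmap : (S.map (X - C ·)).prod.reverse.map σ =
      C (σ (S.map (-·)).prod) * (S.map (X - C ·)).prod.map ι := by
    rw [reverse_multiset_prod_X_sub_C hS0, Polynomial.map_mul, map_C,
      Polynomial.map_multiset_prod, Polynomial.map_multiset_prod, Multiset.map_map,
      Multiset.map_map]
    congr 2
    refine Multiset.map_congr rfl fun a ha => ?_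
    simp [map_inv₀, eq_inv_of_mul_eq_one_left (hS a ha)]
  have hcoeff := congrArg (coeff · k) hmap
  simp only [coeff_map, coeff_C_mul] at hcoeff
  rw [← map_eq_zero_iff σ σ.injective, hcoeff, mul_eq_zero, map_eq_zero_iff ι ι.injective,
    or_iff_right hc]

theorem support_eq_of_map_eq {A B C : Type*} [Semiring A] [Semiring B] [Semiring C]
    {φ : A →+* C} {ψ : B →+* C} (hφ : Function.Injective φ) (hψ : Function.Injective ψ)
    {f : A[X]} {g : B[X]} (h : f.map φ = g.map ψ) : f.support = g.support := by
  rw [← support_map_of_injective f hφ, h, support_map_of_injective g hψ]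

theorem coeff_prod_X_sub_C_eq_zero_iff {F L : Type*} [Field F] [Field L]
    (ι σ : F →+* L) {S : Multiset F} (hS : ∀ a ∈ S, σ a * ι a = 1) {k : ℕ}
    (hk : k ≤ (S.map (X - C ·)).prod.natDegree) :
    (S.map (X - C ·)).prod.coeff k = 0 ↔
      (S.map (X - C ·)).prod.coeff ((S.map (X - C ·)).prod.natDegree - k) = 0 := by
  rw [← coeff_reverse_prod_X_sub_C_eq_zero_iff ι σ hS, coeff_reverse, revAt_le hk]

end Polynomial

theorem IsPrimitiveRoot.exists_ringHom_adjoin_mul_eq_one {L : Type*} [Field L] [CharZero L]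
    {ζ : L} {M : ℕ} [NeZero M] (hζ : IsPrimitiveRoot ζ M) :
    ∃ σ : ℚ⟮ζ⟯ →+* L, ∀ x : ℚ⟮ζ⟯, x ^ M = 1 → σ x * x = 1 := by
  have hint : IsIntegral ℚ ζ := (hζ.isIntegral (NeZero.pos M)).tower_top
  -- `ζ⁻¹` is another root of the minimal polynomial `cyclotomic M ℚ` of `ζ`.
  have hroot : ζ⁻¹ ∈ (minpoly ℚ ζ).aroots L := by
    rw [mem_aroots, ← cyclotomic_eq_minpoly_rat hζ (NeZero.pos M), aeval_def, ← eval_map,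
      map_cyclotomic]
    exact ⟨cyclotomic_ne_zero M ℚ, hζ.inv.isRoot_cyclotomic (NeZero.pos M)⟩
  set σ := (algHomAdjoinIntegralEquiv ℚ hint).symm ⟨ζ⁻¹, hroot⟩
  have hσ : σ (AdjoinSimple.gen ℚ ζ) = ζ⁻¹ :=
    algHomAdjoinIntegralEquiv_symm_apply_gen ℚ hint _
  have hgen : IsPrimitiveRoot (AdjoinSimple.gen ℚ ζ) M :=
    IsPrimitiveRoot.coe_submonoidClass_iff.mp hζ
  refine ⟨σ, fun x hx => ?_⟩
  obtain ⟨i, -, rfl⟩ := hgen.eq_pow_of_pow_eq_one hx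
  change σ _ * _ = 1
  rw [map_pow, hσ, SubmonoidClass.coe_pow, AdjoinSimple.coe_gen, ← mul_pow,
    inv_mul_cancel₀ (hζ.ne_zero (NeZero.ne M)), one_pow]

theorem IsAlgClosed.exists_ringHom_inv_on_roots_of_unity {L : Type*} [Field L] [IsAlgClosed L]
    [CharZero L] (R : Multiset L) (hR : ∀ r ∈ R, ∃ m, 0 < m ∧ r ^ m = 1) :
    ∃ (F : IntermediateField ℚ L) (σ : F →+* L) (S : Multiset F),
      S.map (↑) = R ∧ ∀ a ∈ S, σ a * a = 1 := by
  obtain ⟨M, hM, hRM⟩ := R.exists_pow_eq_one_of_forall hR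
  have : NeZero M := ⟨hM.ne'⟩
  obtain ⟨ζ, hζ⟩ := HasEnoughRootsOfUnity.exists_primitiveRoot L M
  obtain ⟨σ, hσ⟩ := hζ.exists_ringHom_adjoin_mul_eq_one
  have hRζ : ∀ r ∈ R, r ∈ ℚ⟮ζ⟯ := fun r hr => by
    obtain ⟨i, -, rfl⟩ := hζ.eq_pow_of_pow_eq_one (hRM r hr)
    exact pow_mem (mem_adjoin_simple_self ℚ ζ) i
  obtain ⟨S, rfl⟩ : ∃ S : Multiset ℚ⟮ζ⟯, S.map (↑) = R := CanLift.prf R hRζ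
  refine ⟨ℚ⟮ζ⟯, σ, S, rfl, fun a ha => hσ a ?_⟩
  exact Subtype.val_injective (by simpa using hRM a (Multiset.mem_map_of_mem _ ha))

theorem stmt3 {K : Type*} [Field K] [CharZero K] (Φ : Polynomial K) (n : ℕ)
    (hmonic : Φ.Monic) (hdeg : Φ.natDegree = n)
    (hroots : ∀ z : AlgebraicClosure K, Polynomial.aeval z Φ = 0 →
      ∃ m : ℕ, 0 < m ∧ z ^ m = 1)
    (s : ℕ) (hs : s ≤ n) :
    Φ.coeff s ≠ 0 ↔ Φ.coeff (n - s) ≠ 0 := by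
  set L := AlgebraicClosure K
  have : CharZero L := charZero_of_injective_algebraMap (algebraMap K L).injective
  have hsplit := (IsAlgClosed.splits (Φ.map (algebraMap K L))).eq_prod_roots_of_monic
    (hmonic.map _)
  obtain ⟨F, σ, S, hSR, hσ⟩ := IsAlgClosed.exists_ringHom_inv_on_roots_of_unity
    (Φ.map (algebraMap K L)).roots fun r hr => hroots r (by
      rwa [mem_roots_map_of_injective (algebraMap K L).injective hmonic.ne_zero] at hr)
  set q := (S.map (X - C ·)).prod
  have hq : q.map (algebraMap F L) = Φ.map (algebraMap K L) := by
    rw [hsplit, ← hSR, Polynomial.map_multiset_prod, Multiset.map_map, Multiset.map_map]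
    simp
  have hsupp : q.support = Φ.support :=
    support_eq_of_map_eq (algebraMap F L).injective (algebraMap K L).injective hq
  have hdegq : q.natDegree = n := by
    rw [← natDegree_map_eq_of_injective (algebraMap F L).injective, hq, natDegree_map, hdeg]
  have key := coeff_prod_X_sub_C_eq_zero_iff (algebraMap F L) σ hσ (hdegq ▸ hs)
  rw [← hdegq, ← mem_support_iff, ← mem_support_iff, ← hsupp, mem_support_iff,
    mem_support_iff]
  exact not_congr key
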